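/- arXiv:2002.02864 — 8 statements merged into one kernel-verified Lean document; each statement's English description precedes it below -/
import Mathlib

section
/- Let (R, P_Ω) be a matching Rota-Baxter algebra of constant weight λ, i.e., an associative algebra R with a family of linear operators P_ω (ω ∈ Ω) satisfying P_α(x)P_β(y) = P_α(x P_β(y)) + P_β(P_α(x) y) + λ P_α(xy) for all x,y ∈ R and α,β ∈ Ω. Then for any finitely supported family of scalars (k_ω)_{ω∈Ω}, the operator P := Σ_ω k_ω P_ω is a Rota-Baxter operator of weight λ·(Σ_ω k_ω), i.e., P(x)P(y) = P(xP(y)) + P(P(x)y) + λ(Σ_ω k_ω) P(xy) for all x,y ∈ R. -/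
/-- The linear combination `∑ ω, c ω • P ω` of a finitely supported family of
operators. -/
noncomputable def matchingSum {k : Type*} [CommRing k] {R : Type*} [Ring R] [Algebra k R]
    {Ω : Type*} (c : Ω →₀ k) (P : Ω → R →ₗ[k] R) : R →ₗ[k] R :=
  c.sum fun ω a => a • P ω

/-- In a matching Rota-Baxter algebra of constant weight `lam`, any finitely supported
linear combination `P := ∑ ω, c ω • P ω` is a Rota-Baxter operator of weight
`lam * ∑ ω, c ω`. -/
theorem matchingSum_isRotaBaxter {k : Type*} [CommRing k] {R : Type*} [Ring R] [Algebra k R]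
    {Ω : Type*} (P : Ω → R →ₗ[k] R) (lam : k)
    (hP : ∀ (α β : Ω) (x y : R),
      P α x * P β y = P α (x * P β y) + P β (P α x * y) + lam • P α (x * y))
    (c : Ω →₀ k) :
    ∀ x y : R,
      matchingSum c P x * matchingSum c P y =
        matchingSum c P (x * matchingSum c P y) +
        matchingSum c P (matchingSum c P x * y) +
        (lam * c.sum fun _ a => a) • matchingSum c P (x * y) := by
  intro x y
  simp only [matchingSum, Finsupp.sum, LinearMap.coe_sum, Finset.sum_apply,
    LinearMap.smul_apply, Finset.sum_mul_sum, Finset.mul_sum, Finset.sum_mul,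
    map_sum, map_smul, smul_smul, Finset.smul_sum, smul_mul_smul_comm, mul_smul_comm,
    smul_mul_assoc, Finset.sum_smul]
  rw [Finset.sum_comm (s := c.support) (t := c.support)
    (f := fun x_1 x_2 => (c x_1 * c x_2) • P x_2 (P x_1 x * y))]
  rw [Finset.sum_comm (s := c.support) (t := c.support)
    (f := fun x_1 i => (lam * c i * c x_1) • P x_1 (x * y))]
  rw [← Finset.sum_add_distrib, ← Finset.sum_add_distrib]
  refine Finset.sum_congr rfl fun β _ => ?_
  rw [← Finset.sum_add_distrib, ← Finset.sum_add_distrib]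
  refine Finset.sum_congr rfl fun α _ => ?_
  rw [hP α β x y]
  simp only [smul_add, smul_smul]
  module
end

section
/- Let (R, P_Ω) be a matching Rota-Baxter algebra of weight λ_Ω = (λ_ω). Define for each ω ∈ Ω the operation x ∗_ω y := P_ω(x)y − yP_ω(x) − λ_ω yx. Then each ∗_ω satisfies the (left) pre-Lie identity: (x ∗_α y) ∗_β z − x ∗_α (y ∗_β z) = (y ∗_β x) ∗_α z − y ∗_β (x ∗_α z) for all x, y, z ∈ R and α, β ∈ Ω. -/
/-- In a matching Rota-Baxter algebra `(R, P_Ω)` of weight `λ_Ω`, the operations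
`x ∗_ω y := P ω x * y - y * P ω x - λ ω • (y * x)` satisfy the (left) pre-Lie
compatibility identity of a matching (multiple) pre-Lie algebra. -/
theorem matchingRotaBaxter_preLie {k : Type*} [CommRing k] {R : Type*} [Ring R] [Algebra k R]
    {Ω : Type*} (P : Ω → R →ₗ[k] R) (lam : Ω → k)
    (hP : ∀ (α β : Ω) (x y : R),
      P α x * P β y = P α (x * P β y) + P β (P α x * y) + lam β • P α (x * y)) :
    ∀ (α β : Ω) (x y z : R),
      letI star : Ω → R → R → R := fun ω x y => P ω x * y - y * P ω x - lam ω • (y * x)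
      star β (star α x y) z - star α x (star β y z) =
        star α (star β y x) z - star β y (star α x z) := by
  intro α β x y z
  have h1 : P β (P α x * y) = P α x * P β y - P α (x * P β y) - lam β • P α (x * y) := by
    rw [hP α β x y]; abel
  have h2 : P α (P β y * x) = P β y * P α x - P β (y * P α x) - lam α • P β (y * x) := by
    rw [hP β α y x]; abel
  simp only [map_sub, map_smul, h1, h2]
  simp only [sub_mul, mul_sub, smul_sub, smul_mul_assoc, mul_smul_comm, smul_smul,
    mul_comm (lam α) (lam β), mul_assoc]
  abel
end

section
/- Let (R, P_Ω) be a matching Rota-Baxter algebra of weight λ_Ω. Define x ≺_ω y := xP_ω(y) + λ_ω xy and x ≻_ω y := P_ω(x)y for x, y ∈ R and ω ∈ Ω. Then for all x, y, z ∈ R and α, β ∈ Ω these operations satisfy the matching dendriform identities (x ≺_β y) ≺_α z = x ≺_β (y ≺_α z) + x ≺_α (y ≻_β z), (x ≻_α y) ≺_β z = x ≻_α (y ≺_β z), and x ≻_α (y ≻_β z) = (x ≻_α y) ≻_β z + (x ≺_β y) ≻_α z. -/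
/-- A matching Rota-Baxter algebra `(R, P_Ω)` of weight `λ_Ω` induces a matching
dendriform algebra via `x ≺_ω y := x * P ω y + λ ω • (x * y)` and
`x ≻_ω y := P ω x * y`:
(i)  `(x ≺_β y) ≺_α z = x ≺_β (y ≺_α z) + x ≺_α (y ≻_β z)`,
(ii) `(x ≻_α y) ≺_β z = x ≻_α (y ≺_β z)`,
(iii) `x ≻_α (y ≻_β z) = (x ≻_α y) ≻_β z + (x ≺_β y) ≻_α z`. -/
theorem matchingRotaBaxter_dendriform {k : Type*} [CommRing k] {R : Type*} [Ring R]
    [Algebra k R] {Ω : Type*} (P : Ω → R →ₗ[k] R) (lam : Ω → k)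
    (hP : ∀ (α β : Ω) (x y : R),
      P α x * P β y = P α (x * P β y) + P β (P α x * y) + lam β • P α (x * y)) :
    letI prec : Ω → R → R → R := fun ω x y => x * P ω y + lam ω • (x * y)
    letI succ : Ω → R → R → R := fun ω x y => P ω x * y
    ∀ (α β : Ω) (x y z : R),
      (prec α (prec β x y) z = prec β x (prec α y z) + prec α x (succ β y z)) ∧
      (prec β (succ α x y) z = succ α x (prec β y z)) ∧
      (succ α x (succ β y z) = succ β (succ α x y) z + succ α (prec β x y) z) := by
  intro α β x y z
  refine ⟨?_, ?_, ?_⟩ <;>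
    simp only [map_add, map_smul, mul_add, add_mul, smul_add, smul_mul_assoc,
      mul_smul_comm, mul_assoc, smul_smul]
  · rw [hP β α, mul_add, mul_add, mul_comm (lam α) (lam β)]
    simp only [mul_smul_comm]
    abel
  · rw [← mul_assoc, hP α β]
    simp only [add_mul, smul_mul_assoc, mul_assoc]
    abel
end

section
/- A connected graded bialgebra is a Hopf algebra. That is, if H = ⊕_{n≥0} H^{(n)} is a bialgebra with H^{(p)}H^{(q)} ⊆ H^{(p+q)}, Δ(H^{(n)}) ⊆ ⊕_{p+q=n} H^{(p)} ⊗ H^{(q)}, H^{(0)} = k·1_H, and ker ε = ⊕_{n≥1} H^{(n)}, then H admits an antipode S: H → H satisfying m(S ⊗ id)Δ = u∘ε = m(id ⊗ S)Δ. -/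
open TensorProduct

namespace ConnGradedHopf

variable {k : Type*} [CommRing k] {H : Type*} [Ring H] [Bialgebra k H]

/-- Convolution product on `H →ₗ[k] H`. -/
noncomputable def conv (f g : H →ₗ[k] H) : H →ₗ[k] H :=
  (LinearMap.mul' k H) ∘ₗ (TensorProduct.map f g) ∘ₗ (Coalgebra.comul (R := k))

/-- Convolution unit. -/
noncomputable def e : H →ₗ[k] H :=
  (Algebra.linearMap k H) ∘ₗ (Coalgebra.counit (R := k))

lemma conv_e_right (f : H →ₗ[k] H) : conv f (e (k := k) (H := H)) = f := by
  ext x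
  have h1 : (TensorProduct.map f (e (k := k) (H := H))) =
      (LinearMap.rTensor H f) ∘ₗ (LinearMap.lTensor H (Algebra.linearMap k H)) ∘ₗ
        (LinearMap.lTensor H (Coalgebra.counit (R := k))) := by
    ext a b; simp [e]
  simp only [conv, LinearMap.comp_apply, h1, Coalgebra.lTensor_counit_comul]
  simp

lemma conv_e_left (f : H →ₗ[k] H) : conv (e (k := k) (H := H)) f = f := by
  ext x
  have h1 : (TensorProduct.map (e (k := k) (H := H)) f) =
      (LinearMap.lTensor H f) ∘ₗ (LinearMap.rTensor H (Algebra.linearMap k H)) ∘ₗ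
        (LinearMap.rTensor H (Coalgebra.counit (R := k))) := by
    ext a b; simp [e]
  simp only [conv, LinearMap.comp_apply, h1, Coalgebra.rTensor_counit_comul]
  simp

lemma conv_add_left (f g h : H →ₗ[k] H) : conv (f + g) h = conv f h + conv g h := by
  ext x; simp [conv, TensorProduct.map_add_left]

lemma conv_add_right (f g h : H →ₗ[k] H) : conv f (g + h) = conv f g + conv f h := by
  ext x; simp [conv, TensorProduct.map_add_right]

lemma conv_smul_left (c : k) (f h : H →ₗ[k] H) : conv (c • f) h = c • conv f h := by
  ext x; simp [conv, TensorProduct.map_smul_left]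

lemma conv_smul_right (c : k) (f h : H →ₗ[k] H) : conv f (c • h) = c • conv f h := by
  ext x; simp [conv, TensorProduct.map_smul_right]

lemma conv_assoc (f g h : H →ₗ[k] H) : conv (conv f g) h = conv f (conv g h) := by
  have h1 : TensorProduct.map ((LinearMap.mul' k H) ∘ₗ (TensorProduct.map f g) ∘ₗ
      (Coalgebra.comul (R := k))) h =
      (LinearMap.rTensor H (LinearMap.mul' k H)) ∘ₗ
      (LinearMap.rTensor H (TensorProduct.map f g)) ∘ₗ
      (LinearMap.lTensor (H ⊗[k] H) h) ∘ₗ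
      (LinearMap.rTensor H (Coalgebra.comul (R := k))) := by
    ext a b; simp
  have h2 : TensorProduct.map f ((LinearMap.mul' k H) ∘ₗ (TensorProduct.map g h) ∘ₗ
      (Coalgebra.comul (R := k))) =
      (LinearMap.lTensor H (LinearMap.mul' k H)) ∘ₗ
      (LinearMap.lTensor H (TensorProduct.map g h)) ∘ₗ
      (LinearMap.rTensor (H ⊗[k] H) f) ∘ₗ
      (LinearMap.lTensor H (Coalgebra.comul (R := k))) := by
    ext a b; simp
  have h3 : (LinearMap.rTensor H (Coalgebra.comul (R := k))) ∘ₗ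
        (Coalgebra.comul (R := k) (A := H)) =
      ((TensorProduct.assoc k H H H).symm : H ⊗[k] (H ⊗[k] H) →ₗ[k] (H ⊗[k] H) ⊗[k] H) ∘ₗ
        (LinearMap.lTensor H (Coalgebra.comul (R := k))) ∘ₗ Coalgebra.comul :=
    Coalgebra.coassoc_symm.symm
  have h4 : (LinearMap.mul' k H) ∘ₗ (LinearMap.rTensor H (LinearMap.mul' k H)) ∘ₗ
      (LinearMap.rTensor H (TensorProduct.map f g)) ∘ₗ (LinearMap.lTensor (H ⊗[k] H) h) ∘ₗ
      ((TensorProduct.assoc k H H H).symm : H ⊗[k] (H ⊗[k] H) →ₗ[k] (H ⊗[k] H) ⊗[k] H) =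
      (LinearMap.mul' k H) ∘ₗ (LinearMap.lTensor H (LinearMap.mul' k H)) ∘ₗ
        (LinearMap.lTensor H (TensorProduct.map g h)) ∘ₗ
        (LinearMap.rTensor (H ⊗[k] H) f) := by
    ext a b c
    simp [mul_assoc]
  ext x
  simp only [conv, LinearMap.comp_apply, h1, h2]
  rw [show (LinearMap.rTensor H (Coalgebra.comul (R := k))) ((Coalgebra.comul (R := k)) x) =
      (TensorProduct.assoc k H H H).symm ((LinearMap.lTensor H (Coalgebra.comul (R := k)))
        ((Coalgebra.comul (R := k)) x)) from LinearMap.congr_fun h3 x]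
  exact LinearMap.congr_fun h4 ((LinearMap.lTensor H (Coalgebra.comul (R := k)))
    ((Coalgebra.comul (R := k)) x))

/-- Convolution powers of `id - e`. -/
noncomputable def cpow : ℕ → (H →ₗ[k] H)
  | 0 => e
  | n + 1 => conv (cpow n) (LinearMap.id - e)

lemma conv_f_cpow (n : ℕ) :
    conv (LinearMap.id - e) (cpow n) = (cpow (n + 1) : H →ₗ[k] H) := by
  induction n with
  | zero => show conv _ e = conv e _; rw [conv_e_right, conv_e_left]
  | succ n ih => rw [show cpow (n+1) = conv (cpow n) (LinearMap.id - e) from rfl,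
      ← conv_assoc, ih]; rfl

/-- Truncated geometric series for the antipode. -/
noncomputable def T (n : ℕ) : H →ₗ[k] H :=
  ∑ j ∈ Finset.range (n + 1), ((-1 : k) ^ j) • cpow j

lemma conv_cpow_id (j : ℕ) :
    conv (cpow j) LinearMap.id = (cpow j + cpow (j + 1) : H →ₗ[k] H) := by
  have : (LinearMap.id : H →ₗ[k] H) = e + (LinearMap.id - e) := by abel
  rw [this, conv_add_right, conv_e_right]; rfl

lemma conv_id_cpow (j : ℕ) :
    conv LinearMap.id (cpow j) = (cpow j + cpow (j + 1) : H →ₗ[k] H) := by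
  have : (LinearMap.id : H →ₗ[k] H) = e + (LinearMap.id - e) := by abel
  rw [this, conv_add_left, conv_e_left, conv_f_cpow]

lemma conv_T_id (n : ℕ) :
    conv (T n) LinearMap.id = (e + ((-1 : k) ^ n) • cpow (n + 1) : H →ₗ[k] H) := by
  induction n with
  | zero =>
    have h0 : (T 0 : H →ₗ[k] H) = e := by
      show ∑ j ∈ Finset.range 1, ((-1 : k) ^ j) • cpow j = e
      rw [Finset.sum_range_one]; simp only [pow_zero, one_smul]; rfl
    have h1 : (cpow 1 : H →ₗ[k] H) = LinearMap.id - e := by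
      show conv e _ = _; rw [conv_e_left]
    rw [h0, conv_e_left, h1]
    simp only [pow_zero, one_smul]
    abel
  | succ n ih =>
    have hT : (T (n+1) : H →ₗ[k] H) = T n + ((-1 : k) ^ (n+1)) • cpow (n+1) := by
      simp [T, Finset.sum_range_succ]
    rw [hT, conv_add_left, ih, conv_smul_left, conv_cpow_id]
    rw [pow_succ]
    module

lemma conv_id_T (n : ℕ) :
    conv LinearMap.id (T n) = (e + ((-1 : k) ^ n) • cpow (n + 1) : H →ₗ[k] H) := by
  induction n with
  | zero =>
    have h0 : (T 0 : H →ₗ[k] H) = e := by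
      show ∑ j ∈ Finset.range 1, ((-1 : k) ^ j) • cpow j = e
      rw [Finset.sum_range_one]; simp only [pow_zero, one_smul]; rfl
    have h1 : (cpow 1 : H →ₗ[k] H) = LinearMap.id - e := by
      show conv e _ = _; rw [conv_e_left]
    rw [h0, conv_e_right, h1]
    simp only [pow_zero, one_smul]
    abel
  | succ n ih =>
    have hT : (T (n+1) : H →ₗ[k] H) = T n + ((-1 : k) ^ (n+1)) • cpow (n+1) := by
      simp [T, Finset.sum_range_succ]
    rw [hT, conv_add_right, ih, conv_smul_right, conv_id_cpow]
    rw [pow_succ]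
    module

theorem main {k : Type*} [CommRing k] {H : Type*} [Ring H]
    [Bialgebra k H] (A : ℕ → Submodule k H)
    (hinternal : DirectSum.IsInternal A)
    (hmul : ∀ (p q : ℕ), ∀ x ∈ A p, ∀ y ∈ A q, x * y ∈ A (p + q))
    (hcomul : ∀ (n : ℕ), ∀ x ∈ A n,
      Coalgebra.comul (R := k) x ∈
        ⨆ p ∈ Finset.range (n + 1),
          LinearMap.range (TensorProduct.map (A p).subtype (A (n - p)).subtype))
    (hzero : A 0 = (1 : Submodule k H))
    (hker : LinearMap.ker (Coalgebra.counit (R := k) (A := H)) = ⨆ n, ⨆ _ : 1 ≤ n, A n) :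
    ∃ S : H →ₗ[k] H,
      (LinearMap.mul' k H).comp
          ((TensorProduct.map S LinearMap.id).comp (Coalgebra.comul (R := k))) =
        (Algebra.linearMap k H).comp (Coalgebra.counit (R := k)) ∧
      (LinearMap.mul' k H).comp
          ((TensorProduct.map LinearMap.id S).comp (Coalgebra.comul (R := k))) =
        (Algebra.linearMap k H).comp (Coalgebra.counit (R := k)) := by
  classical
  -- `id - e` kills the degree-0 part
  have hf0 : ∀ x ∈ A 0, ((LinearMap.id - e : H →ₗ[k] H)) x = 0 := by
    intro x hx
    rw [hzero, Submodule.one_eq_range] at hx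
    obtain ⟨c, rfl⟩ := hx
    simp [e]
  -- key vanishing lemma
  have key : ∀ n m : ℕ, n < m → ∀ x ∈ A n, (cpow m : H →ₗ[k] H) x = 0 := by
    intro n
    induction n using Nat.strong_induction_on with
    | _ n IH =>
      intro m hm x hx
      obtain ⟨m, rfl⟩ : ∃ m', m = m' + 1 := ⟨m - 1, by omega⟩
      have hker' : (⨆ p ∈ Finset.range (n + 1),
          LinearMap.range (TensorProduct.map (A p).subtype (A (n - p)).subtype)) ≤
          LinearMap.ker ((LinearMap.mul' k H) ∘ₗ
            TensorProduct.map (cpow m) (LinearMap.id - e)) := by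
        refine iSup₂_le fun p hp => ?_
        rw [LinearMap.range_le_ker_iff]
        apply TensorProduct.ext'
        intro a b
        simp only [LinearMap.comp_apply, TensorProduct.map_tmul, LinearMap.zero_apply,
          Submodule.coe_subtype, LinearMap.mul'_apply]
        have hp' : p ≤ n := Nat.lt_succ_iff.mp (Finset.mem_range.mp hp)
        rcases eq_or_lt_of_le hp' with h | h
        · have hb : (b : H) ∈ A 0 := by
            have h0 : n - p = 0 := by omega
            exact h0 ▸ b.2
          rw [hf0 (b : H) hb, mul_zero]
        · have ha : (cpow m : H →ₗ[k] H) (a : H) = 0 := IH p h m (by omega) (a : H) a.2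
          rw [ha, zero_mul]
      have hmem := hker' (hcomul n x hx)
      rw [LinearMap.mem_ker] at hmem
      show (conv (cpow m) (LinearMap.id - e)) x = 0
      simpa [conv] using hmem
  -- the antipode
  let E := LinearEquiv.ofBijective (DirectSum.coeLinearMap A) hinternal
  set S : H →ₗ[k] H :=
    (DirectSum.toModule k ℕ H fun n => (T n) ∘ₗ (A n).subtype) ∘ₗ E.symm.toLinearMap
    with hSdef
  have hST : ∀ n, ∀ x ∈ A n, S x = (T n : H →ₗ[k] H) x := by
    intro n x hx
    have hE : E.symm x = DirectSum.of (fun n => A n) n ⟨x, hx⟩ := by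
      rw [LinearEquiv.symm_apply_eq]
      exact (DirectSum.coeLinearMap_of A n ⟨x, hx⟩).symm
    rw [hSdef]
    simp only [LinearMap.comp_apply, LinearEquiv.coe_coe, hE, ← DirectSum.lof_eq_of k,
      DirectSum.toModule_lof]
    rfl
  have hSN : ∀ N n, n ≤ N → ∀ x ∈ A n, S x = (T N : H →ₗ[k] H) x := by
    intro N n hn x hx
    rw [hST n x hx]
    show (∑ j ∈ Finset.range (n + 1), ((-1 : k) ^ j) • cpow j) x
      = (∑ j ∈ Finset.range (N + 1), ((-1 : k) ^ j) • cpow j) x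
    simp only [LinearMap.sum_apply]
    refine Finset.sum_subset ?_ fun j hj hnj => ?_
    · intro j hj
      simp only [Finset.mem_range] at hj ⊢
      omega
    · have hj' : n < j := by
        simp only [Finset.mem_range] at hj hnj; omega
      simp [key n j hj' x hx]
  refine ⟨S, ?_, ?_⟩
  · ext x
    have hx : x ∈ ⨆ n, A n := by rw [hinternal.submodule_iSup_eq_top]; trivial
    refine Submodule.iSup_induction (motive := fun y =>
      ((LinearMap.mul' k H).comp ((TensorProduct.map S LinearMap.id).comp
        (Coalgebra.comul (R := k)))) y =
      ((Algebra.linearMap k H).comp (Coalgebra.counit (R := k))) y) A hx ?_ (by simp) ?_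
    · intro n x hx
      have hk : (⨆ p ∈ Finset.range (n + 1),
          LinearMap.range (TensorProduct.map (A p).subtype (A (n - p)).subtype)) ≤
          LinearMap.ker (TensorProduct.map S (LinearMap.id : H →ₗ[k] H)
            - TensorProduct.map (T n) (LinearMap.id : H →ₗ[k] H)) := by
        refine iSup₂_le fun p hp => ?_
        rw [LinearMap.range_le_ker_iff]
        apply TensorProduct.ext'
        intro a b
        have hp' : p ≤ n := Nat.lt_succ_iff.mp (Finset.mem_range.mp hp)
        simp only [LinearMap.comp_apply, TensorProduct.map_tmul, LinearMap.zero_apply,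
          Submodule.coe_subtype, LinearMap.sub_apply, LinearMap.id_coe, id_eq]
        rw [hSN n p hp' (a : H) a.2, sub_self]
      have h1 : (TensorProduct.map S LinearMap.id) (Coalgebra.comul (R := k) x) =
          (TensorProduct.map (T n) LinearMap.id) (Coalgebra.comul (R := k) x) := by
        have := hk (hcomul n x hx)
        rw [LinearMap.mem_ker, LinearMap.sub_apply, sub_eq_zero] at this
        exact this
      have h2 : (conv (T n) LinearMap.id : H →ₗ[k] H) x = (e : H →ₗ[k] H) x := by
        rw [conv_T_id]
        simp [key n (n+1) (by omega) x hx]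
      simpa [conv, LinearMap.comp_apply, h1, e] using h2
    · intro y z hy hz
      simp only [map_add, hy, hz]
  · ext x
    have hx : x ∈ ⨆ n, A n := by rw [hinternal.submodule_iSup_eq_top]; trivial
    refine Submodule.iSup_induction (motive := fun y =>
      ((LinearMap.mul' k H).comp ((TensorProduct.map LinearMap.id S).comp
        (Coalgebra.comul (R := k)))) y =
      ((Algebra.linearMap k H).comp (Coalgebra.counit (R := k))) y) A hx ?_ (by simp) ?_
    · intro n x hx
      have hk : (⨆ p ∈ Finset.range (n + 1),
          LinearMap.range (TensorProduct.map (A p).subtype (A (n - p)).subtype)) ≤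
          LinearMap.ker (TensorProduct.map (LinearMap.id : H →ₗ[k] H) S
            - TensorProduct.map (LinearMap.id : H →ₗ[k] H) (T n)) := by
        refine iSup₂_le fun p hp => ?_
        rw [LinearMap.range_le_ker_iff]
        apply TensorProduct.ext'
        intro a b
        simp only [LinearMap.comp_apply, TensorProduct.map_tmul, LinearMap.zero_apply,
          Submodule.coe_subtype, LinearMap.sub_apply, LinearMap.id_coe, id_eq]
        rw [hSN n (n - p) (by omega) (b : H) b.2, sub_self]
      have h1 : (TensorProduct.map LinearMap.id S) (Coalgebra.comul (R := k) x) =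
          (TensorProduct.map LinearMap.id (T n)) (Coalgebra.comul (R := k) x) := by
        have := hk (hcomul n x hx)
        rw [LinearMap.mem_ker, LinearMap.sub_apply, sub_eq_zero] at this
        exact this
      have h2 : (conv LinearMap.id (T n) : H →ₗ[k] H) x = (e : H →ₗ[k] H) x := by
        rw [conv_id_T]
        simp [key n (n+1) (by omega) x hx]
      simpa [conv, LinearMap.comp_apply, h1, e] using h2
    · intro y z hy hz
      simp only [map_add, hy, hz]

end ConnGradedHopf


/-- A connected graded bialgebra is a Hopf algebra: if `H = ⊕ₙ A n` is a bialgebra with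
`A p * A q ⊆ A (p+q)`, `Δ(A n) ⊆ Σ_{p+q=n} A p ⊗ A q`, `A 0 = k·1` and
`ker ε = ⊕_{n≥1} A n`, then `H` admits an antipode `S` with
`m ∘ (S ⊗ id) ∘ Δ = u ∘ ε = m ∘ (id ⊗ S) ∘ Δ`. -/
theorem connected_graded_bialgebra_isHopf {k : Type*} [CommRing k] {H : Type*} [Ring H]
    [Bialgebra k H] (A : ℕ → Submodule k H)
    (hinternal : DirectSum.IsInternal A)
    (hmul : ∀ (p q : ℕ), ∀ x ∈ A p, ∀ y ∈ A q, x * y ∈ A (p + q))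
    (hcomul : ∀ (n : ℕ), ∀ x ∈ A n,
      Coalgebra.comul (R := k) x ∈
        ⨆ p ∈ Finset.range (n + 1),
          LinearMap.range (TensorProduct.map (A p).subtype (A (n - p)).subtype))
    (hzero : A 0 = (1 : Submodule k H))
    (hker : LinearMap.ker (Coalgebra.counit (R := k) (A := H)) = ⨆ n, ⨆ _ : 1 ≤ n, A n) :
    ∃ S : H →ₗ[k] H,
      (LinearMap.mul' k H).comp
          ((TensorProduct.map S LinearMap.id).comp (Coalgebra.comul (R := k))) =
        (Algebra.linearMap k H).comp (Coalgebra.counit (R := k)) ∧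
      (LinearMap.mul' k H).comp
          ((TensorProduct.map LinearMap.id S).comp (Coalgebra.comul (R := k))) =
        (Algebra.linearMap k H).comp (Coalgebra.counit (R := k)) := by
  exact ConnGradedHopf.main A hinternal hmul hcomul hzero hker
end

section
/- Let H = (H, m, u, Δ, ε) be a bialgebra such that the underlying coaugmented coalgebra is connected cofiltered: there is an exhaustive increasing filtration {C_(n)}_{n≥0} with im u ⊆ C_(n) for all n, Δ(C_(n)) ⊆ Σ_{p+q=n} C_(p) ⊗ C_(q), and C_(0) = im u = k·1_H. Then H is a Hopf algebra (admits an antipode). -/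
open TensorProduct

noncomputable section ConvAux

variable {k : Type*} [CommRing k] {H : Type*} [Ring H] [Bialgebra k H]

/-- Convolution product on `H →ₗ[k] H`. -/
def convP (f g : H →ₗ[k] H) : H →ₗ[k] H :=
  (LinearMap.mul' k H) ∘ₗ (TensorProduct.map f g) ∘ₗ (Coalgebra.comul (R := k))

/-- The convolution unit `u ∘ ε`. -/
def convE : H →ₗ[k] H := (Algebra.linearMap k H).comp (Coalgebra.counit (R := k))

lemma convP_apply (f g : H →ₗ[k] H) (x : H) :
    convP f g x = (LinearMap.mul' k H) (TensorProduct.map f g (Coalgebra.comul (R := k) x)) := rfl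

lemma convE_one (g : H →ₗ[k] H) : convP convE g = g := by
  ext x
  have h1 : TensorProduct.map (convE (k := k) (H := H)) g =
      (TensorProduct.map (Algebra.linearMap k H) g).comp
        ((Coalgebra.counit (R := k) (A := H)).rTensor H) := by
    rw [LinearMap.rTensor, ← TensorProduct.map_comp]
    simp [convE]
  rw [convP_apply, h1, LinearMap.comp_apply, Coalgebra.rTensor_counit_comul]
  simp

lemma convE_one' (f : H →ₗ[k] H) : convP f convE = f := by
  ext x
  have h1 : TensorProduct.map f (convE (k := k) (H := H)) =
      (TensorProduct.map f (Algebra.linearMap k H)).comp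
        ((Coalgebra.counit (R := k) (A := H)).lTensor H) := by
    rw [LinearMap.lTensor, ← TensorProduct.map_comp]
    simp [convE]
  rw [convP_apply, h1, LinearMap.comp_apply, Coalgebra.lTensor_counit_comul]
  simp

lemma convP_assoc (f g h : H →ₗ[k] H) : convP (convP f g) h = convP f (convP g h) := by
  have key : ∀ u : H ⊗[k] (H ⊗[k] H),
      (LinearMap.mul' k H) (TensorProduct.map ((LinearMap.mul' k H) ∘ₗ TensorProduct.map f g) h
        ((TensorProduct.assoc k H H H).symm.toLinearMap u)) =
      (LinearMap.mul' k H) (TensorProduct.map f ((LinearMap.mul' k H) ∘ₗ TensorProduct.map g h) u) := by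
    intro u
    induction u using TensorProduct.induction_on with
    | zero => simp only [map_zero]
    | add a b ha hb =>
      simp only [map_add, LinearEquiv.coe_coe] at ha hb ⊢
      rw [ha, hb]
    | tmul a t =>
      induction t using TensorProduct.induction_on with
      | zero => simp only [TensorProduct.tmul_zero, map_zero]
      | add s t hs ht =>
        simp only [TensorProduct.tmul_add, map_add, LinearEquiv.coe_coe] at hs ht ⊢
        rw [hs, ht]
      | tmul b c =>
        simp [TensorProduct.assoc_symm_tmul, mul_assoc]
  ext x
  have lhs : convP (convP f g) h x =
      (LinearMap.mul' k H) (TensorProduct.map ((LinearMap.mul' k H) ∘ₗ TensorProduct.map f g) h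
        ((Coalgebra.comul (R := k) (A := H)).rTensor H (Coalgebra.comul (R := k) x))) := by
    rw [convP_apply]
    congr 1
    have : TensorProduct.map (convP f g) h =
        (TensorProduct.map ((LinearMap.mul' k H) ∘ₗ TensorProduct.map f g) h).comp
          ((Coalgebra.comul (R := k) (A := H)).rTensor H) := by
      rw [LinearMap.rTensor, ← TensorProduct.map_comp]
      simp [convP, LinearMap.comp_assoc]
    rw [this]; rfl
  have rhs : convP f (convP g h) x =
      (LinearMap.mul' k H) (TensorProduct.map f ((LinearMap.mul' k H) ∘ₗ TensorProduct.map g h)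
        ((Coalgebra.comul (R := k) (A := H)).lTensor H (Coalgebra.comul (R := k) x))) := by
    rw [convP_apply]
    congr 1
    have : TensorProduct.map f (convP g h) =
        (TensorProduct.map f ((LinearMap.mul' k H) ∘ₗ TensorProduct.map g h)).comp
          ((Coalgebra.comul (R := k) (A := H)).lTensor H) := by
      rw [LinearMap.lTensor, ← TensorProduct.map_comp]
      simp [convP, LinearMap.comp_assoc]
    rw [this]; rfl
  rw [lhs, rhs, ← Coalgebra.coassoc_symm_apply]
  exact key _

lemma convP_add_left (f f' g : H →ₗ[k] H) : convP (f + f') g = convP f g + convP f' g := by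
  unfold convP; rw [TensorProduct.map_add_left]; ext x; simp

lemma convP_add_right (f g g' : H →ₗ[k] H) : convP f (g + g') = convP f g + convP f g' := by
  unfold convP; rw [TensorProduct.map_add_right]; ext x; simp

lemma convP_smul_left (c : k) (f g : H →ₗ[k] H) : convP (c • f) g = c • convP f g := by
  unfold convP; rw [TensorProduct.map_smul_left]; ext x; simp

lemma convP_zero_left (g : H →ₗ[k] H) : convP (0 : H →ₗ[k] H) g = 0 := by
  unfold convP; rw [TensorProduct.map_zero_left]; ext x; simp

lemma convP_sub_left (f f' g : H →ₗ[k] H) : convP (f - f') g = convP f g - convP f' g := by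
  have := convP_add_left (f - f') f' g
  rw [sub_add_cancel] at this
  rw [this]; abel

lemma convP_sub_right (f g g' : H →ₗ[k] H) : convP f (g - g') = convP f g - convP f g' := by
  have := convP_add_right f (g - g') g'
  rw [sub_add_cancel] at this
  rw [this]; abel

lemma convP_sum_left {ι : Type*} (s : Finset ι) (F : ι → (H →ₗ[k] H)) (g : H →ₗ[k] H) :
    convP (∑ i ∈ s, F i) g = ∑ i ∈ s, convP (F i) g := by
  classical
  induction s using Finset.cons_induction with
  | empty => simp [convP_zero_left]
  | cons a s ha ih => rw [Finset.sum_cons, Finset.sum_cons, convP_add_left, ih]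

lemma convP_smul_right (c : k) (f g : H →ₗ[k] H) : convP f (c • g) = c • convP f g := by
  unfold convP; rw [TensorProduct.map_smul_right]; ext x; simp

lemma convP_zero_right (f : H →ₗ[k] H) : convP f (0 : H →ₗ[k] H) = 0 := by
  unfold convP; rw [TensorProduct.map_zero_right]; ext x; simp

lemma convP_sum_right {ι : Type*} (s : Finset ι) (f : H →ₗ[k] H) (G : ι → (H →ₗ[k] H)) :
    convP f (∑ i ∈ s, G i) = ∑ i ∈ s, convP f (G i) := by
  classical
  induction s using Finset.cons_induction with
  | empty => simp [convP_zero_right]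
  | cons a s ha ih => rw [Finset.sum_cons, Finset.sum_cons, convP_add_right, ih]

/-- Convolution powers of `f` (with `convE` as the zeroth power). -/
def convPowF (f : H →ₗ[k] H) : ℕ → (H →ₗ[k] H)
  | 0 => convE
  | (i + 1) => convP f (convPowF f i)

lemma convPowF_succ_right (f : H →ₗ[k] H) (i : ℕ) :
    convP (convPowF f i) f = convPowF f (i + 1) := by
  induction i with
  | zero => show convP convE f = convP f convE; rw [convE_one, convE_one']
  | succ i ih =>
    show convP (convP f (convPowF f i)) f = convP f (convPowF f (i + 1))
    rw [convP_assoc, ih]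

end ConvAux

/-- A bialgebra whose underlying coaugmented coalgebra is connected cofiltered is a Hopf
algebra: given an exhaustive increasing filtration `C n` with `C 0 = k·1` (the image of
the unit) and `Δ(C n) ⊆ Σ_{p+q=n} C p ⊗ C q`, there exists an antipode `S` satisfying
`m ∘ (S ⊗ id) ∘ Δ = u ∘ ε = m ∘ (id ⊗ S) ∘ Δ`. -/
theorem connected_cofiltered_bialgebra_isHopf {k : Type*} [CommRing k] {H : Type*} [Ring H]
    [Bialgebra k H] (C : ℕ → Submodule k H)
    (hmono : Monotone C)
    (hexh : ⨆ n, C n = ⊤)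
    (hzero : C 0 = (1 : Submodule k H))
    (hcomul : ∀ (n : ℕ), ∀ x ∈ C n,
      Coalgebra.comul (R := k) x ∈
        ⨆ p ∈ Finset.range (n + 1),
          LinearMap.range (TensorProduct.map (C p).subtype (C (n - p)).subtype)) :
    ∃ S : H →ₗ[k] H,
      (LinearMap.mul' k H).comp
          ((TensorProduct.map S LinearMap.id).comp (Coalgebra.comul (R := k))) =
        (Algebra.linearMap k H).comp (Coalgebra.counit (R := k)) ∧
      (LinearMap.mul' k H).comp
          ((TensorProduct.map LinearMap.id S).comp (Coalgebra.comul (R := k))) =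
        (Algebra.linearMap k H).comp (Coalgebra.counit (R := k)) := by
  classical
  set f : H →ₗ[k] H := LinearMap.id - convE with hf
  set P : ℕ → (H →ₗ[k] H) := convPowF f with hP
  -- `f` kills `C 0`
  have hf0 : ∀ x ∈ C 0, f x = 0 := by
    intro x hx
    rw [hzero] at hx
    obtain ⟨c, rfl⟩ := Submodule.mem_one.mp hx
    simp [hf, convE]
  -- vanishing of convolution powers on the filtration
  have hPvan : ∀ i, ∀ x ∈ C i, P (i + 1) x = 0 := by
    intro i
    induction i with
    | zero =>
      intro x hx
      have : P 1 = f := by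
        show convP f convE = f
        exact convE_one' f
      rw [this]
      exact hf0 x hx
    | succ i ih =>
      intro x hx
      have hmem := hcomul (i + 1) x hx
      set L : H ⊗[k] H →ₗ[k] H :=
        (LinearMap.mul' k H) ∘ₗ (TensorProduct.map f (P (i + 1))) with hL
      have hker : (⨆ p ∈ Finset.range (i + 1 + 1),
          LinearMap.range (TensorProduct.map (C p).subtype (C (i + 1 - p)).subtype)) ≤
          LinearMap.ker L := by
        refine iSup₂_le fun p hp => ?_
        rw [LinearMap.range_le_ker_iff]
        apply TensorProduct.ext'
        intro a b
        rcases Nat.eq_zero_or_pos p with rfl | hp'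
        · have h0 : f (a : H) = 0 := hf0 a a.2
          simp [hL, h0]
        · have hb : (b : H) ∈ C i := hmono (by omega) b.2
          have h0 : P (i + 1) (b : H) = 0 := ih (b : H) hb
          simp [hL, h0]
      have h0 : L (Coalgebra.comul (R := k) x) = 0 := hker hmem
      show convP f (P (i + 1)) x = 0
      rw [convP_apply]
      exact h0
  -- every element lies in some filtration piece
  have hmemC : ∀ x : H, ∃ n, x ∈ C n := by
    intro x
    have hx : x ∈ ⨆ n, C n := hexh ▸ Submodule.mem_top
    exact (Submodule.mem_iSup_of_directed C hmono.directed_le).mp hx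
  have hvan' : ∀ n (x : H), x ∈ C n → ∀ i, n < i → P i x = 0 := by
    intro n x hx i hi
    obtain ⟨m, rfl⟩ : ∃ m, i = m + 1 := ⟨i - 1, by omega⟩
    exact hPvan m x (hmono (by omega) hx)
  have hsupp : ∀ n (x : H), x ∈ C n →
      (Function.support fun i => (-1 : k) ^ i • P i x) ⊆ ↑(Finset.range (n + 1)) := by
    intro n x hx i hi
    simp only [Finset.coe_range, Set.mem_Iio]
    by_contra hlt
    push_neg at hlt
    refine hi ?_
    have h0 := hvan' n x hx i (by omega)
    simp only [h0, smul_zero]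
  -- the antipode, as a geometric series
  set S : H →ₗ[k] H :=
    { toFun := fun x => ∑ᶠ i, (-1 : k) ^ i • P i x
      map_add' := by
        intro x y
        obtain ⟨n, hn⟩ := hmemC x
        obtain ⟨m, hm⟩ := hmemC y
        have hxN : x ∈ C (max n m) := hmono (le_max_left n m) hn
        have hyN : y ∈ C (max n m) := hmono (le_max_right n m) hm
        rw [finsum_eq_finset_sum_of_support_subset _ (hsupp (max n m) _ (add_mem hxN hyN)),
            finsum_eq_finset_sum_of_support_subset _ (hsupp (max n m) x hxN),
            finsum_eq_finset_sum_of_support_subset _ (hsupp (max n m) y hyN),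
            ← Finset.sum_add_distrib]
        exact Finset.sum_congr rfl fun i _ => by rw [map_add, smul_add]
      map_smul' := by
        intro c x
        obtain ⟨n, hn⟩ := hmemC x
        rw [RingHom.id_apply,
            finsum_eq_finset_sum_of_support_subset _ (hsupp n _ (Submodule.smul_mem _ c hn)),
            finsum_eq_finset_sum_of_support_subset _ (hsupp n x hn),
            Finset.smul_sum]
        exact Finset.sum_congr rfl fun i _ => by rw [map_smul, smul_comm] } with hSdef
  have hS : ∀ n (x : H), x ∈ C n →
      S x = ∑ i ∈ Finset.range (n + 1), (-1 : k) ^ i • P i x := by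
    intro n x hx
    exact finsum_eq_finset_sum_of_support_subset _ (hsupp n x hx)
  refine ⟨S, ?_, ?_⟩
  · -- left antipode identity
    show convP S LinearMap.id = convE
    ext x
    obtain ⟨n, hx⟩ := hmemC x
    set T : H →ₗ[k] H := ∑ i ∈ Finset.range (n + 1), (-1 : k) ^ i • P i with hT
    have hSTagree : ∀ p, p ≤ n → ((S - T) ∘ₗ (C p).subtype) = 0 := by
      intro p hp
      ext a
      have haC : (a : H) ∈ C n := hmono hp a.2
      simp only [LinearMap.comp_apply, Submodule.coe_subtype, LinearMap.sub_apply,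
        LinearMap.zero_apply, sub_eq_zero]
      rw [hS n a haC, hT]
      simp [LinearMap.sum_apply, LinearMap.smul_apply]
    have hA : convP (S - T) LinearMap.id x = 0 := by
      rw [convP_apply]
      set L := (LinearMap.mul' k H) ∘ₗ TensorProduct.map (S - T) LinearMap.id with hL
      have hker : (⨆ p ∈ Finset.range (n + 1),
          LinearMap.range (TensorProduct.map (C p).subtype (C (n - p)).subtype)) ≤
          LinearMap.ker L := by
        refine iSup₂_le fun p hp => ?_
        rw [LinearMap.range_le_ker_iff]
        apply TensorProduct.ext'
        intro a b
        have h0 : (S - T) (a : H) = 0 :=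
          LinearMap.congr_fun (hSTagree p (Nat.lt_succ_iff.mp (Finset.mem_range.mp hp))) a
        simp [hL, h0]
      exact hker (hcomul n x hx)
    have hST : convP S LinearMap.id x = convP T LinearMap.id x := by
      have h1 : convP S LinearMap.id x - convP T LinearMap.id x = 0 := by
        rw [← LinearMap.sub_apply, ← convP_sub_left, hA]
      exact sub_eq_zero.mp h1
    have hid : (LinearMap.id : H →ₗ[k] H) = convE + f := by
      rw [hf]; abel
    have hTid : convP T LinearMap.id =
        ∑ i ∈ Finset.range (n + 1), ((-1 : k) ^ i • (P i + P (i + 1))) := by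
      rw [hT, convP_sum_left]
      refine Finset.sum_congr rfl fun i _ => ?_
      rw [convP_smul_left]
      congr 1
      rw [hid, convP_add_right, convE_one' (P i)]
      congr 1
      exact convPowF_succ_right f i
    have htel : ∑ i ∈ Finset.range (n + 1), ((-1 : k) ^ i • (P i x + P (i + 1) x)) =
        ((-1 : k) ^ 0 • P 0 x) - ((-1 : k) ^ (n + 1) • P (n + 1) x) := by
      rw [← Finset.sum_range_sub' (fun i => (-1 : k) ^ i • P i x) (n + 1)]
      refine Finset.sum_congr rfl fun i _ => ?_
      rw [pow_succ, smul_add, mul_smul, neg_one_smul, smul_neg, sub_neg_eq_add]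
    have hfin : convP S LinearMap.id x = convE (k := k) x := by
      rw [hST, hTid]
      rw [LinearMap.sum_apply]
      have : ∀ i ∈ Finset.range (n + 1),
          ((-1 : k) ^ i • (P i + P (i + 1))) x = (-1 : k) ^ i • (P i x + P (i + 1) x) := by
        intro i _
        simp
      rw [Finset.sum_congr rfl this, htel, hPvan n x hx, smul_zero, sub_zero, pow_zero, one_smul]
      rfl
    exact hfin
  · -- right antipode identity
    show convP LinearMap.id S = convE
    ext x
    obtain ⟨n, hx⟩ := hmemC x
    set T : H →ₗ[k] H := ∑ i ∈ Finset.range (n + 1), (-1 : k) ^ i • P i with hT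
    have hSTagree : ∀ p, p ≤ n → ((S - T) ∘ₗ (C p).subtype) = 0 := by
      intro p hp
      ext a
      have haC : (a : H) ∈ C n := hmono hp a.2
      simp only [LinearMap.comp_apply, Submodule.coe_subtype, LinearMap.sub_apply,
        LinearMap.zero_apply, sub_eq_zero]
      rw [hS n a haC, hT]
      simp [LinearMap.sum_apply, LinearMap.smul_apply]
    have hA : convP LinearMap.id (S - T) x = 0 := by
      rw [convP_apply]
      set L := (LinearMap.mul' k H) ∘ₗ TensorProduct.map LinearMap.id (S - T) with hL
      have hker : (⨆ p ∈ Finset.range (n + 1),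
          LinearMap.range (TensorProduct.map (C p).subtype (C (n - p)).subtype)) ≤
          LinearMap.ker L := by
        refine iSup₂_le fun p hp => ?_
        rw [LinearMap.range_le_ker_iff]
        apply TensorProduct.ext'
        intro a b
        have h0 : (S - T) (b : H) = 0 :=
          LinearMap.congr_fun (hSTagree (n - p) (Nat.sub_le n p)) b
        simp [hL, h0]
      exact hker (hcomul n x hx)
    have hST : convP LinearMap.id S x = convP LinearMap.id T x := by
      have h1 : convP LinearMap.id S x - convP LinearMap.id T x = 0 := by
        rw [← LinearMap.sub_apply, ← convP_sub_right, hA]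
      exact sub_eq_zero.mp h1
    have hid : (LinearMap.id : H →ₗ[k] H) = convE + f := by
      rw [hf]; abel
    have hTid : convP LinearMap.id T =
        ∑ i ∈ Finset.range (n + 1), ((-1 : k) ^ i • (P i + P (i + 1))) := by
      rw [hT, convP_sum_right]
      refine Finset.sum_congr rfl fun i _ => ?_
      rw [convP_smul_right]
      congr 1
      rw [hid, convP_add_left, convE_one (P i)]
      congr 1
    have htel : ∑ i ∈ Finset.range (n + 1), ((-1 : k) ^ i • (P i x + P (i + 1) x)) =
        ((-1 : k) ^ 0 • P 0 x) - ((-1 : k) ^ (n + 1) • P (n + 1) x) := by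
      rw [← Finset.sum_range_sub' (fun i => (-1 : k) ^ i • P i x) (n + 1)]
      refine Finset.sum_congr rfl fun i _ => ?_
      rw [pow_succ, smul_add, mul_smul, neg_one_smul, smul_neg, sub_neg_eq_add]
    have hfin : convP LinearMap.id S x = convE (k := k) x := by
      rw [hST, hTid]
      rw [LinearMap.sum_apply]
      have : ∀ i ∈ Finset.range (n + 1),
          ((-1 : k) ^ i • (P i + P (i + 1))) x = (-1 : k) ^ i • (P i x + P (i + 1) x) := by
        intro i _
        simp
      rw [Finset.sum_congr rfl this, htel, hPvan n x hx, smul_zero, sub_zero, pow_zero, one_smul]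
      rfl
    exact hfin
end

section
/- Let R be an associative algebra and r = Σ_i u_i ⊗ v_i ∈ R ⊗ R a solution of the polarized associative Yang-Baxter equation of weight λ (with r = s): r_{13} r_{12} − r_{12} r_{23} + r_{23} r_{13} = −λ r_{13}. Then the linear operator P: R → R defined by P(x) := Σ_i u_i x v_i is a Rota-Baxter operator of weight λ: P(x)P(y) = P(xP(y)) + P(P(x)y) + λP(xy). -/
open TensorProduct

/-- If `r = ∑ i, u i ⊗ v i ∈ R ⊗ R` is a solution of the polarized associative
Yang-Baxter equation of weight `λ`, `r₁₃ r₁₂ - r₁₂ r₂₃ + r₂₃ r₁₃ = -λ • r₁₃`, then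
`P x := ∑ i, u i * x * v i` is a Rota-Baxter operator of weight `λ`. -/
theorem aybe_gives_rotaBaxter {k : Type*} [CommRing k] {R : Type*} [Ring R] [Algebra k R]
    {ι : Type*} (s : Finset ι) (u v : ι → R) (lam : k)
    (haybe :
      letI r12 : R ⊗[k] R ⊗[k] R := ∑ i ∈ s, u i ⊗ₜ[k] v i ⊗ₜ[k] (1 : R)
      letI r13 : R ⊗[k] R ⊗[k] R := ∑ i ∈ s, u i ⊗ₜ[k] (1 : R) ⊗ₜ[k] v i
      letI r23 : R ⊗[k] R ⊗[k] R := ∑ i ∈ s, (1 : R) ⊗ₜ[k] u i ⊗ₜ[k] v i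
      r13 * r12 - r12 * r23 + r23 * r13 = -(lam • r13)) :
    ∀ x y : R,
      (∑ i ∈ s, u i * x * v i) * (∑ i ∈ s, u i * y * v i) =
        (∑ i ∈ s, u i * (x * ∑ j ∈ s, u j * y * v j) * v i) +
        (∑ i ∈ s, u i * ((∑ j ∈ s, u j * x * v j) * y) * v i) +
        lam • ∑ i ∈ s, u i * (x * y) * v i := by
  intro x y
  classical
  -- the trilinear evaluation map  a ⊗ b ⊗ c ↦ (a*x) * ((b*y) * c)
  set F : R ⊗[k] R ⊗[k] R →ₗ[k] R :=
    LinearMap.mul' k R ∘ₗ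
      TensorProduct.map (LinearMap.mul' k R ∘ₗ
        TensorProduct.map (LinearMap.mulRight k x) (LinearMap.mulRight k y)) LinearMap.id with hFdef
  have hF : ∀ a b c : R, F (a ⊗ₜ[k] b ⊗ₜ[k] c) = a * x * (b * y * c) := by
    intro a b c
    simp [hFdef, mul_assoc]
  -- expand the three products of sums in the AYBE into double sums
  have h1312 : (∑ i ∈ s, u i ⊗ₜ[k] (1 : R) ⊗ₜ[k] v i) * (∑ i ∈ s, u i ⊗ₜ[k] v i ⊗ₜ[k] (1 : R))
      = ∑ i ∈ s, ∑ j ∈ s, (u i * u j) ⊗ₜ[k] v j ⊗ₜ[k] v i := by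
    rw [Finset.sum_mul_sum]
    simp [Algebra.TensorProduct.tmul_mul_tmul]
  have h1223 : (∑ i ∈ s, u i ⊗ₜ[k] v i ⊗ₜ[k] (1 : R)) * (∑ i ∈ s, (1 : R) ⊗ₜ[k] u i ⊗ₜ[k] v i)
      = ∑ i ∈ s, ∑ j ∈ s, u i ⊗ₜ[k] (v i * u j) ⊗ₜ[k] v j := by
    rw [Finset.sum_mul_sum]
    simp [Algebra.TensorProduct.tmul_mul_tmul]
  have h2313 : (∑ i ∈ s, (1 : R) ⊗ₜ[k] u i ⊗ₜ[k] v i) * (∑ i ∈ s, u i ⊗ₜ[k] (1 : R) ⊗ₜ[k] v i)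
      = ∑ i ∈ s, ∑ j ∈ s, u j ⊗ₜ[k] u i ⊗ₜ[k] (v i * v j) := by
    rw [Finset.sum_mul_sum]
    simp [Algebra.TensorProduct.tmul_mul_tmul]
  rw [h1312, h1223, h2313] at haybe
  have key := congrArg F haybe
  simp only [map_add, map_sub, map_neg, map_smul, map_sum, hF] at key
  -- identify each side with the four terms of the Rota-Baxter identity
  have eAB : (∑ i ∈ s, u i * x * v i) * (∑ i ∈ s, u i * y * v i)
      = ∑ i ∈ s, ∑ j ∈ s, u i * x * (v i * u j * y * v j) := by
    rw [Finset.sum_mul_sum]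
    refine Finset.sum_congr rfl fun i _ => Finset.sum_congr rfl fun j _ => ?_
    noncomm_ring
  have eC : (∑ i ∈ s, u i * (x * ∑ j ∈ s, u j * y * v j) * v i)
      = ∑ i ∈ s, ∑ j ∈ s, u j * x * (u i * y * (v i * v j)) := by
    simp only [Finset.mul_sum, Finset.sum_mul]
    rw [Finset.sum_comm]
    refine Finset.sum_congr rfl fun i _ => Finset.sum_congr rfl fun j _ => ?_
    noncomm_ring
  have eD : (∑ i ∈ s, u i * ((∑ j ∈ s, u j * x * v j) * y) * v i)
      = ∑ i ∈ s, ∑ j ∈ s, u i * u j * x * (v j * y * v i) := by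
    simp only [Finset.mul_sum, Finset.sum_mul]
    refine Finset.sum_congr rfl fun i _ => Finset.sum_congr rfl fun j _ => ?_
    noncomm_ring
  have eE : (lam • ∑ i ∈ s, u i * (x * y) * v i)
      = lam • ∑ i ∈ s, u i * x * (1 * y * v i) := by
    congr 1
    refine Finset.sum_congr rfl fun i _ => ?_
    noncomm_ring
  rw [eAB, eC, eD, eE]
  set A := ∑ i ∈ s, ∑ j ∈ s, u i * x * (v i * u j * y * v j) with hA
  set C := ∑ i ∈ s, ∑ j ∈ s, u j * x * (u i * y * (v i * v j)) with hC
  set D := ∑ i ∈ s, ∑ j ∈ s, u i * u j * x * (v j * y * v i) with hD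
  set E := lam • ∑ i ∈ s, u i * x * (1 * y * v i) with hE
  -- key : D - A + C = -E
  apply eq_of_sub_eq_zero
  have h0 : A - (C + D + E) = -((D - A + C) - -E) := by abel
  rw [h0, key, sub_self, neg_zero]
end

section
/- Let (R, P_Ω) be a matching Rota-Baxter algebra of weight λ_Ω where all λ_ω equal a common λ, and suppose the family of scalars k_ω (ω ∈ Ω, finitely supported) satisfies Σ_ω k_ω = 1. Then P := Σ_ω k_ω P_ω is a Rota-Baxter operator of weight λ. -/
/-- In a matching Rota-Baxter algebra of constant weight `λ`, if the finitely supported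
scalars `c ω` satisfy `∑ ω, c ω = 1`, then `P := ∑ ω, c ω • P ω` is a Rota-Baxter
operator of weight `λ`. -/
theorem matchingSum_isRotaBaxter_of_sum_one {k : Type*} [CommRing k] {R : Type*} [Ring R]
    [Algebra k R] {Ω : Type*} (P : Ω → R →ₗ[k] R) (lam : k)
    (hP : ∀ (α β : Ω) (x y : R),
      P α x * P β y = P α (x * P β y) + P β (P α x * y) + lam • P α (x * y))
    (c : Ω →₀ k) (hc : (c.sum fun _ a => a) = 1) :
    ∀ x y : R,
      letI Pt : R → R := fun x => c.sum fun ω a => a • P ω x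
      Pt x * Pt y = Pt (x * Pt y) + Pt (Pt x * y) + lam • Pt (x * y) := by
  intro x y
  simp only [Finsupp.sum] at hc ⊢
  have smulmul : ∀ (a b : k) (u v : R), (a • u) * (b • v) = (a * b) • (u * v) := by
    intro a b u v
    rw [smul_mul_assoc, mul_smul_comm, smul_smul]
  -- LHS as double sum
  have hL : (∑ α ∈ c.support, c α • P α x) * (∑ β ∈ c.support, c β • P β y)
      = ∑ α ∈ c.support, ∑ β ∈ c.support, (c α * c β) •
          (P α (x * P β y) + P β (P α x * y) + lam • P α (x * y)) := by
    rw [Finset.sum_mul_sum]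
    exact Finset.sum_congr rfl fun α _ => Finset.sum_congr rfl fun β _ => by
      rw [smulmul, hP]
  rw [hL]
  -- first RHS term
  have h1 : (∑ α ∈ c.support, c α • P α (x * ∑ β ∈ c.support, c β • P β y))
      = ∑ α ∈ c.support, ∑ β ∈ c.support, (c α * c β) • P α (x * P β y) := by
    refine Finset.sum_congr rfl fun α _ => ?_
    rw [Finset.mul_sum, map_sum, Finset.smul_sum]
    refine Finset.sum_congr rfl fun β _ => ?_
    rw [mul_smul_comm, map_smul, smul_smul]
  have h2 : (∑ β ∈ c.support, c β • P β ((∑ α ∈ c.support, c α • P α x) * y))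
      = ∑ β ∈ c.support, ∑ α ∈ c.support, (c α * c β) • P β (P α x * y) := by
    refine Finset.sum_congr rfl fun β _ => ?_
    rw [Finset.sum_mul, map_sum, Finset.smul_sum]
    refine Finset.sum_congr rfl fun α _ => ?_
    rw [smul_mul_assoc, map_smul, smul_smul, mul_comm (c β) (c α)]
  have h3 : (lam • ∑ α ∈ c.support, c α • P α (x * y))
      = ∑ α ∈ c.support, ∑ β ∈ c.support, (c α * c β) • (lam • P α (x * y)) := by
    rw [Finset.smul_sum]
    refine Finset.sum_congr rfl fun α _ => ?_
    rw [← Finset.sum_smul]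
    have : ∑ β ∈ c.support, (c α * c β) = c α := by
      rw [← Finset.mul_sum, hc, mul_one]
    rw [this, smul_comm]
  rw [h1, h2, h3, Finset.sum_comm (s := c.support) (t := c.support)
    (f := fun β α => (c α * c β) • P β (P α x * y))]
  rw [← Finset.sum_add_distrib, ← Finset.sum_add_distrib]
  refine Finset.sum_congr rfl fun α _ => ?_
  rw [← Finset.sum_add_distrib, ← Finset.sum_add_distrib]
  exact Finset.sum_congr rfl fun β _ => by rw [smul_add, smul_add]
end

section
/- Let (R, P_Ω) be a matching Rota-Baxter algebra of weight 0 and define the multiple pre-Lie brackets x ∗_ω y := P_ω(x)y − yP_ω(x). Then the commutator-style bracket [x, y]_ω := x ∗_ω y − y ∗_ω x need not be a Lie bracket for a fixed ω, but the total operation x ∗ y := Σ_{ω ∈ S} x ∗_ω y (S ⊆ Ω finite) satisfies the left pre-Lie identity: (x ∗ y) ∗ z − x ∗ (y ∗ z) = (y ∗ x) ∗ z − y ∗ (x ∗ z). -/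
/-- In a matching Rota-Baxter algebra of weight 0 with brackets
`x ∗_ω y := P ω x * y - y * P ω x`, the total operation
`x ∗ y := ∑_{ω ∈ S} x ∗_ω y` over a finite subset `S ⊆ Ω` satisfies the left pre-Lie
identity `(x∗y)∗z - x∗(y∗z) = (y∗x)∗z - y∗(x∗z)`. -/
theorem matchingRotaBaxter_total_preLie {k : Type*} [CommRing k] {R : Type*} [Ring R]
    [Algebra k R] {Ω : Type*} (P : Ω → R →ₗ[k] R)
    (hP : ∀ (α β : Ω) (x y : R),
      P α x * P β y = P α (x * P β y) + P β (P α x * y))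
    (S : Finset Ω) :
    ∀ x y z : R,
      letI star : R → R → R := fun x y => ∑ ω ∈ S, (P ω x * y - y * P ω x)
      star (star x y) z - star x (star y z) = star (star y x) z - star y (star x z) := by
  intro x y z
  set Q : R →ₗ[k] R := ∑ ω ∈ S, P ω with hQdef
  have hQapp : ∀ w : R, Q w = ∑ ω ∈ S, P ω w := fun w => by
    simp [hQdef, LinearMap.sum_apply]
  have hstar : ∀ a b : R, (∑ ω ∈ S, (P ω a * b - b * P ω a)) = Q a * b - b * Q a := by
    intro a b
    rw [Finset.sum_sub_distrib, ← Finset.sum_mul, ← Finset.mul_sum, hQapp]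
  have hQ : ∀ a b : R, Q a * Q b = Q (a * Q b) + Q (Q a * b) := by
    intro a b
    calc Q a * Q b
        = ∑ α ∈ S, ∑ β ∈ S, P α a * P β b := by
          rw [hQapp a, hQapp b, Finset.sum_mul_sum]
      _ = ∑ α ∈ S, ∑ β ∈ S, (P α (a * P β b) + P β (P α a * b)) := by
          exact Finset.sum_congr rfl fun α hα => Finset.sum_congr rfl fun β hβ => hP α β a b
      _ = Q (a * Q b) + Q (Q a * b) := by
          simp only [Finset.sum_add_distrib]
          congr 1
          · rw [hQapp (a * Q b)]
            refine Finset.sum_congr rfl fun α hα => ?_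
            rw [hQapp b, Finset.mul_sum, map_sum]
          · rw [hQapp (Q a * b), Finset.sum_comm]
            refine Finset.sum_congr rfl fun β hβ => ?_
            rw [hQapp a, Finset.sum_mul, map_sum]
  simp only [hstar]
  have e1 : Q (Q x * y) = Q x * Q y - Q (x * Q y) := eq_sub_of_add_eq' (hQ x y).symm
  have e2 : Q (Q y * x) = Q y * Q x - Q (y * Q x) := eq_sub_of_add_eq' (hQ y x).symm
  simp only [map_sub, e1, e2]
  noncomm_ring
end
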